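/- For all integers A and B: there exist integers a, b with Reach A B a b, a < 1 and b ≥ 0 (a safe exit state is reachable from (A, B)) if and only if (B ≥ 0 ∧ A ≤ 0) ∨ (A ≥ 1 ∧ B ≥ A). That is, the program terminates gracefully exactly on the initial states satisfying (b ≥ 0 ∧ a ≤ 0) ∨ (a ≥ 1 ∧ b ≥ a). -/
import Mathlib


def step : ℤ × ℤ → ℤ × ℤ → Prop :=
  fun p q => p.1 ≥ 1 ∧ q.1 = p.1 - 1 ∧ q.2 = p.2 - 1

def Reach (A B a b : ℤ) : Prop :=
  Relation.ReflTransGen step (A, B) (a, b)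

lemma reach_inv {A B : ℤ} {p : ℤ × ℤ} (h : Relation.ReflTransGen step (A, B) p) :
    p.1 ≤ A ∧ p.2 - p.1 = B - A ∧ (p.1 = A ∨ p.1 ≥ 0) := by
  induction h with
  | refl => simp
  | tail _ hs ih =>
    obtain ⟨h1, h2, h3⟩ := hs
    constructor
    · omega
    constructor
    · omega
    · right; omega

lemma reach_nat (n : ℕ) : ∀ B : ℤ, Reach n B 0 (B - n) := by
  induction n with
  | zero =>
    intro B
    have : B - (0:ℕ) = B := by push_cast; ring
    rw [this]; exact Relation.ReflTransGen.refl
  | succ k ih =>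
    intro B
    apply Relation.ReflTransGen.head (b := ((k : ℤ), B - 1))
    · refine ⟨by push_cast; omega, by push_cast; ring, by ring⟩
    · have h := ih (B - 1)
      have he : B - 1 - (k:ℤ) = B - (k+1:ℕ) := by push_cast; ring
      rw [he] at h
      exact h

theorem exit_reachable_iff (A B : ℤ) :
    (∃ a b : ℤ, Reach A B a b ∧ a < 1 ∧ b ≥ 0) ↔
      (B ≥ 0 ∧ A ≤ 0) ∨ (A ≥ 1 ∧ B ≥ A) := by
  constructor
  · rintro ⟨a, b, hr, ha, hb⟩
    have := reach_inv hr
    simp only at this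
    rcases this with ⟨h1, h2, h3 | h3⟩
    · left; omega
    · rcases eq_or_lt_of_le h1 with h | h
      · left; omega
      · right; omega
  · rintro (⟨hB, hA⟩ | ⟨hA, hB⟩)
    · exact ⟨A, B, Relation.ReflTransGen.refl, by omega, hB⟩
    · refine ⟨0, B - A, ?_, by omega, by omega⟩
      have := reach_nat A.toNat B
      rwa [Int.toNat_of_nonneg (by omega)] at this
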